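/- The operator norm of e^{−i(H₁+⋯+H_m)t} − (e^{−iH₁t/r}⋯e^{−iH_mt/r})^r, for Hermitian H₁,...,H_m, is bounded by C·(‖H₁‖+⋯+‖H_m‖)²·t²/r for a universal constant C (so the Trotter error is O((‖H‖t)²/r)). -/

import Mathlib

open NormedSpace Matrix
open scoped Matrix.Norms.L2Operator
open scoped Nat

set_option linter.unusedSectionVars false
set_option maxHeartbeats 1000000

section TrotterAux

variable {𝔸 : Type*} [NormedRing 𝔸] [NormedAlgebra ℂ 𝔸] [CompleteSpace 𝔸]

lemma real_exp_tsum (a : ℝ) : Real.exp a = ∑' n : ℕ, a ^ n / n ! := by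
  rw [Real.exp_eq_exp_ℝ, exp_eq_tsum_div]

lemma term_norm_le [NormOneClass 𝔸] (x : 𝔸) (n : ℕ) :
    ‖(n !⁻¹ : ℂ) • x ^ n‖ ≤ ‖x‖ ^ n / n ! := by
  rw [norm_smul, norm_inv]
  cases n with
  | zero => simp
  | succ n =>
    rw [div_eq_inv_mul]
    gcongr
    · simp
    · exact norm_pow_le' x (Nat.succ_pos n)

lemma my_norm_exp_le [NormOneClass 𝔸] (x : 𝔸) : ‖exp x‖ ≤ Real.exp ‖x‖ := by
  rw [exp_eq_tsum ℂ]
  refine (norm_tsum_le_tsum_norm (norm_expSeries_summable' x)).trans ?_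
  rw [real_exp_tsum]
  exact Summable.tsum_le_tsum (term_norm_le x) (norm_expSeries_summable' x)
    (Real.summable_pow_div_factorial _)


set_option linter.unusedSectionVars false
set_option maxHeartbeats 1000000

lemma real_exp_remainder (a : ℝ) :
    ∑' n : ℕ, a ^ (n + 2) / (n + 2)! = Real.exp a - 1 - a := by
  have hs := Real.summable_pow_div_factorial a
  rw [real_exp_tsum a, Summable.tsum_eq_zero_add hs,
    Summable.tsum_eq_zero_add ((summable_nat_add_iff 1).2 hs)]
  simp [Nat.factorial]

set_option maxHeartbeats 1000000 in
lemma exp_remainder [NormOneClass 𝔸] (x : 𝔸) :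
    ‖exp x - 1 - x‖ ≤ Real.exp ‖x‖ - 1 - ‖x‖ := by
  have hs : Summable (fun n : ℕ => (n !⁻¹ : ℂ) • x ^ n) := expSeries_summable' x
  have hsn : Summable (fun n : ℕ => ‖(n !⁻¹ : ℂ) • x ^ n‖) := norm_expSeries_summable' x
  have hsn2 : Summable (fun n : ℕ => ‖((n + 2)!⁻¹ : ℂ) • x ^ (n + 2)‖) :=
    (summable_nat_add_iff 2).2 hsn
  have hr2 : Summable (fun n : ℕ => ‖x‖ ^ (n + 2) / (n + 2)!) :=
    (summable_nat_add_iff 2).2 (Real.summable_pow_div_factorial ‖x‖)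
  have h0 : exp x - 1 - x = ∑' n : ℕ, ((n + 2)!⁻¹ : ℂ) • x ^ (n + 2) := by
    have : exp x = ∑' n : ℕ, (n !⁻¹ : ℂ) • x ^ n := by rw [exp_eq_tsum ℂ]
    rw [this, Summable.tsum_eq_zero_add hs, Summable.tsum_eq_zero_add ((summable_nat_add_iff 1).2 hs)]
    simp [Nat.factorial]
  rw [h0, ← real_exp_remainder]
  exact (norm_tsum_le_tsum_norm hsn2).trans
    (Summable.tsum_le_tsum (fun n => term_norm_le x (n + 2)) hsn2 hr2)

lemma remainder_mono {a b : ℝ} (ha : 0 ≤ a) (hab : a ≤ b) :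
    Real.exp a - 1 - a ≤ Real.exp b - 1 - b := by
  have hb : 0 ≤ b := ha.trans hab
  rw [← real_exp_remainder, ← real_exp_remainder]
  refine Summable.tsum_le_tsum (fun n => ?_)
    ((summable_nat_add_iff 2).2 (Real.summable_pow_div_factorial a))
    ((summable_nat_add_iff 2).2 (Real.summable_pow_div_factorial b))
  gcongr

lemma remainder_quad {a : ℝ} (ha : 0 ≤ a) :
    Real.exp a - 1 - a ≤ a ^ 2 * Real.exp a := by
  rw [← real_exp_remainder, real_exp_tsum, ← tsum_mul_left]
  refine Summable.tsum_le_tsum (fun n => ?_)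
    ((summable_nat_add_iff 2).2 (Real.summable_pow_div_factorial a))
    ((Real.summable_pow_div_factorial a).mul_left _)
  have h1 : (n ! : ℝ) ≤ (n + 2)! := by
    exact_mod_cast Nat.factorial_le (by omega)
  have h2 : (0:ℝ) < n ! := by positivity
  rw [pow_add]
  calc a ^ n * a ^ 2 / (n + 2)! ≤ a ^ n * a ^ 2 / n ! := by gcongr
    _ = a ^ 2 * (a ^ n / n !) := by ring

lemma list_norm_sum_nonneg (L : List 𝔸) : 0 ≤ (L.map norm).sum := by
  refine List.sum_nonneg fun x hx => ?_
  obtain ⟨y, -, rfl⟩ := List.mem_map.1 hx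
  exact norm_nonneg y

lemma list_norm_sum_le (L : List 𝔸) : ‖L.sum‖ ≤ (L.map norm).sum := by
  induction L with
  | nil => simp
  | cons a L ih =>
    simp only [List.sum_cons, List.map_cons]
    exact (norm_add_le _ _).trans (by gcongr)

lemma prod_exp_norm_le [NormOneClass 𝔸] (L : List 𝔸) :
    ‖(L.map (exp)).prod‖ ≤ Real.exp ((L.map norm).sum) := by
  induction L with
  | nil => simp
  | cons a L ih =>
    simp only [List.map_cons, List.prod_cons, List.sum_cons, Real.exp_add]
    exact (norm_mul_le _ _).trans
      (mul_le_mul (my_norm_exp_le a) ih (norm_nonneg _) (Real.exp_pos _).le)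

lemma prod_exp_remainder [NormOneClass 𝔸] (L : List 𝔸) :
    ‖(L.map (exp)).prod - 1 - L.sum‖
      ≤ Real.exp ((L.map norm).sum) - 1 - (L.map norm).sum := by
  induction L with
  | nil => simp
  | cons a L ih =>
    have hs0 : 0 ≤ (L.map norm).sum := list_norm_sum_nonneg L
    set P := (L.map (exp)).prod with hP
    set S := L.sum with hS
    set s := (L.map norm).sum with hs
    have hPn : ‖P‖ ≤ Real.exp s := prod_exp_norm_le L
    have hSs : ‖S‖ ≤ s := by rw [hS, hs]; exact list_norm_sum_le L
    have hP1 : ‖P - 1‖ ≤ Real.exp s - 1 := by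
      have h1 : P - 1 = P - 1 - S + S := by abel
      rw [h1]
      have := norm_add_le (P - 1 - S) S
      linarith
    have key : exp a * P - 1 - (a + S)
        = (exp a - 1 - a) * P + a * (P - 1) + (P - 1 - S) := by
      noncomm_ring
    simp only [List.map_cons, List.prod_cons, List.sum_cons, Real.exp_add, key]
    rw [← hP, ← hS, key]
    calc ‖(exp a - 1 - a) * P + a * (P - 1) + (P - 1 - S)‖
        ≤ ‖(exp a - 1 - a) * P‖ + ‖a * (P - 1)‖ + ‖P - 1 - S‖ :=
          norm_add₃_le
      _ ≤ (Real.exp ‖a‖ - 1 - ‖a‖) * Real.exp s + ‖a‖ * (Real.exp s - 1)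
            + (Real.exp s - 1 - s) := by
          refine add_le_add (add_le_add ?_ ?_) ih
          · exact (norm_mul_le _ _).trans (mul_le_mul (exp_remainder a) hPn
              (norm_nonneg _) (by linarith [Real.add_one_le_exp ‖a‖]))
          · exact (norm_mul_le _ _).trans (mul_le_mul_of_nonneg_left hP1 (norm_nonneg a))
      _ = Real.exp ‖a‖ * Real.exp s - 1 - (‖a‖ + s) := by ring

lemma pow_sub_pow_norm_le [NormOneClass 𝔸] (u v : 𝔸) (hu : ‖u‖ ≤ 1) (hv : ‖v‖ ≤ 1) (n : ℕ) :
    ‖u ^ n - v ^ n‖ ≤ n * ‖u - v‖ := by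
  induction n with
  | zero => simp
  | succ n ih =>
    have hun : ‖u ^ n‖ ≤ 1 := by
      refine le_trans ?_ (pow_le_one₀ (norm_nonneg u) hu (n := n))
      cases n with
      | zero => simp
      | succ k => exact norm_pow_le' u (Nat.succ_pos k)
    have key : u ^ (n + 1) - v ^ (n + 1) = u ^ n * (u - v) + (u ^ n - v ^ n) * v := by
      noncomm_ring
    rw [key]
    have h1 : ‖u ^ n * (u - v)‖ ≤ ‖u - v‖ := by
      refine (norm_mul_le _ _).trans ?_
      nlinarith [norm_nonneg (u - v)]
    have h2 : ‖(u ^ n - v ^ n) * v‖ ≤ n * ‖u - v‖ := by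
      refine (norm_mul_le _ _).trans ?_
      nlinarith [norm_nonneg (u ^ n - v ^ n), norm_nonneg v,
        Nat.cast_nonneg (α := ℝ) n, norm_nonneg (u - v)]
    refine (norm_add_le _ _).trans ?_
    push_cast
    linarith


end TrotterAux

theorem trotter_error_bound :
    ∃ C : ℝ, 0 < C ∧ ∀ (N m : ℕ) (H : Fin m → Matrix (Fin N) (Fin N) ℂ),
      (∀ j, (H j).IsHermitian) → ∀ (t : ℝ) (r : ℕ), 0 < r →
      ‖exp ((-Complex.I * t) • ∑ j, H j)
          - (List.ofFn (fun j => exp ((-Complex.I * (t / r)) • H j))).prod ^ r‖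
        ≤ C * (∑ j, ‖H j‖) ^ 2 * t ^ 2 / r := by
  refine ⟨6, by norm_num, ?_⟩
  intro N m H hH t r hr
  have hrR : (1 : ℝ) ≤ r := by exact_mod_cast hr
  have hrne : (r : ℝ) ≠ 0 := by positivity
  have hsum0 : 0 ≤ ∑ j, ‖H j‖ := Finset.sum_nonneg fun j _ => norm_nonneg _
  rcases Nat.eq_zero_or_pos N with rfl | hN
  · have h0 : (exp ((-Complex.I * t) • ∑ j, H j)
        - (List.ofFn (fun j => exp ((-Complex.I * (t / r)) • H j))).prod ^ r) = 0 :=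
      Subsingleton.elim _ _
    rw [h0, norm_zero]
    positivity
  haveI : Nonempty (Fin N) := Fin.pos_iff_nonempty.mp hN
  haveI hnt : Nontrivial (Matrix (Fin N) (Fin N) ℂ) := inferInstance
  haveI hno : NormOneClass (Matrix (Fin N) (Fin N) ℂ) := inferInstance
  letI : NormedAlgebra ℚ (Matrix (Fin N) (Fin N) ℂ) := NormedAlgebra.restrictScalars ℚ ℂ _
  -- skew-adjointness
  have hskew : ∀ (z : ℂ), star z = -z → ∀ M : Matrix (Fin N) (Fin N) ℂ, M.IsHermitian →
      (z • M) ∈ skewAdjoint (Matrix (Fin N) (Fin N) ℂ) := by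
    intro z hz M hM
    rw [skewAdjoint.mem_iff, star_smul, Matrix.star_eq_conjTranspose, hM.eq, hz, neg_smul]
  have hz1 : star (-Complex.I * ((t : ℂ) / (r : ℂ))) = -(-Complex.I * ((t : ℂ) / (r : ℂ))) := by
    simp [Complex.ext_iff]
  have hz2 : star (-Complex.I * (t : ℂ)) = -(-Complex.I * (t : ℂ)) := by
    simp [Complex.ext_iff]
  have hHsum : (∑ j, H j).IsHermitian := by
    rw [Matrix.IsHermitian, Matrix.conjTranspose_sum]
    exact Finset.sum_congr rfl fun j _ => hH j
  set s : ℝ := ∑ j, ‖H j‖ with hs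
  set a : ℝ := s * |t| / r with ha
  have ha0 : 0 ≤ a := by positivity
  set X : Matrix (Fin N) (Fin N) ℂ := (-Complex.I * (t / r)) • ∑ j, H j with hX
  set L : List (Matrix (Fin N) (Fin N) ℂ) :=
    List.ofFn (fun j => (-Complex.I * (t / r)) • H j) with hL
  set u : Matrix (Fin N) (Fin N) ℂ := exp X with hu
  set v : Matrix (Fin N) (Fin N) ℂ :=
    (List.ofFn (fun j => exp ((-Complex.I * (t / r)) • H j))).prod with hv
  have hcnorm : ‖(-Complex.I * (t / r) : ℂ)‖ = |t| / r := by
    rw [norm_mul, norm_neg, Complex.norm_I, one_mul, norm_div, Complex.norm_real,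
      Complex.norm_natCast, Real.norm_eq_abs]
  have hu1 : ‖u‖ = 1 :=
    CStarRing.norm_of_mem_unitary (exp_mem_unitary_of_mem_skewAdjoint (hskew _ hz1 _ hHsum))
  have hv1 : ‖v‖ = 1 := by
    refine CStarRing.norm_of_mem_unitary (Submonoid.list_prod_mem (unitary _) fun x hx => ?_)
    obtain ⟨j, rfl⟩ := List.mem_ofFn.1 hx
    exact exp_mem_unitary_of_mem_skewAdjoint (hskew _ hz1 _ (hH j))
  -- exp of the full Hamiltonian is u ^ r
  have hUr : exp ((-Complex.I * t) • ∑ j, H j) = u ^ r := by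
    rw [hu, hX, ← NormedSpace.exp_nsmul]
    congr 1
    rw [← Nat.cast_smul_eq_nsmul ℂ, smul_smul]
    congr 1
    have hrC : (r : ℂ) ≠ 0 := Nat.cast_ne_zero.mpr hr.ne'
    rw [mul_comm ((r : ℂ)), mul_assoc, div_mul_cancel₀ _ hrC]
  -- sums and norms of the list
  have hLsum : L.sum = X := by
    rw [hL, hX, List.sum_ofFn, Finset.smul_sum]
  have hLnorm : (L.map norm).sum = a := by
    rw [hL, List.map_ofFn, List.sum_ofFn]
    show (∑ j, ‖(-Complex.I * (t / r)) • H j‖) = a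
    rw [ha, hs]
    rw [Finset.sum_congr rfl fun j _ => by rw [norm_smul, hcnorm]]
    rw [← Finset.mul_sum]
    ring
  have hXa : ‖X‖ ≤ a := by
    rw [hX, ha]
    refine (norm_smul _ _).le.trans ?_
    rw [hcnorm]
    calc |t| / r * ‖∑ j, H j‖ ≤ |t| / r * s :=
          mul_le_mul_of_nonneg_left (norm_sum_le _ _) (by positivity)
      _ = s * |t| / r := by ring
  have hvmap : v = (L.map (exp)).prod := by
    rw [hv, hL, List.map_ofFn]
    rfl
  -- remainder bounds
  have hrem_u : ‖u - 1 - X‖ ≤ Real.exp a - 1 - a := by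
    rw [hu]
    exact (exp_remainder X).trans (remainder_mono (norm_nonneg X) hXa)
  have hrem_v : ‖v - 1 - X‖ ≤ Real.exp a - 1 - a := by
    rw [hvmap, ← hLsum, ← hLnorm]
    exact prod_exp_remainder L
  have huv : ‖u - v‖ ≤ 2 * (Real.exp a - 1 - a) := by
    have h1 : u - v = (u - 1 - X) - (v - 1 - X) := by abel
    rw [h1]
    have := norm_sub_le (u - 1 - X) (v - 1 - X)
    linarith
  have hra : (r : ℝ) * a ^ 2 = s ^ 2 * t ^ 2 / r := by
    rw [ha]
    field_simp
    rw [sq_abs]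
  rw [hUr]
  by_cases hac : a ≤ 1
  · have hexp3 : Real.exp a ≤ 3 := by
      calc Real.exp a ≤ Real.exp 1 := Real.exp_le_exp.2 hac
        _ ≤ 3 := by linarith [Real.exp_one_lt_d9.le]
    have step1 : ‖u ^ r - v ^ r‖ ≤ (r : ℝ) * ‖u - v‖ :=
      pow_sub_pow_norm_le u v hu1.le hv1.le r
    have step2 : ‖u - v‖ ≤ 2 * (a ^ 2 * Real.exp a) := by
      refine huv.trans (mul_le_mul_of_nonneg_left ?_ (by norm_num))
      exact remainder_quad ha0
    have step3 : ‖u - v‖ ≤ 2 * (a ^ 2 * 3) := by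
      refine step2.trans (mul_le_mul_of_nonneg_left ?_ (by norm_num))
      exact mul_le_mul_of_nonneg_left hexp3 (sq_nonneg a)
    have hr0 : (0 : ℝ) ≤ (r : ℝ) := by positivity
    calc ‖u ^ r - v ^ r‖ ≤ (r : ℝ) * (2 * (a ^ 2 * 3)) :=
          step1.trans (mul_le_mul_of_nonneg_left step3 hr0)
      _ = 6 * ((r : ℝ) * a ^ 2) := by ring
      _ = 6 * s ^ 2 * t ^ 2 / r := by rw [hra]; ring
  · push_neg at hac
    have hpow : ∀ w : Matrix (Fin N) (Fin N) ℂ, ‖w‖ = 1 → ‖w ^ r‖ ≤ 1 := by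
      intro w hw
      calc ‖w ^ r‖ ≤ ‖w‖ ^ r := norm_pow_le' w hr
        _ = 1 := by rw [hw, one_pow]
    have hbound : ‖u ^ r - v ^ r‖ ≤ 2 := by
      have := norm_sub_le (u ^ r) (v ^ r)
      have h1 := hpow u hu1
      have h2 := hpow v hv1
      linarith
    refine hbound.trans ?_
    have key : 6 * s ^ 2 * t ^ 2 / r = 6 * ((r : ℝ) * a ^ 2) := by rw [hra]; ring
    rw [key]
    nlinarith [ha0, hrR, hac]
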